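/- arXiv:2509.03755 — 4 statements merged into one kernel-verified Lean document; each statement's English description precedes it below -/
import Mathlib

section
/- Let n be an even natural number with n ≥ 2 and set m = n/2. Let p : Finset (Fin n) → ℝ satisfy p(S) ≥ 0 for all S, p(S) = 0 whenever |S| ≠ m, and Σ_S p(S) = 1. Define the marginal x_i := Σ_{S : i ∈ S} p(S) and set q_i := (1 − x_i)/m for each i ∈ Fin n. Then: (a) q_i ≥ 0 for all i and Σ_{i ∈ Fin n} q_i = 1, and (b) Σ_S p(S) · (Σ_{i ∈ S} q_i) ≤ 1/2. -/
/-- Core of the randomized lower bound: if an honest peer queries a random set of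
`m = n/2` bits distributed according to `p`, and the adversary picks index `i` with
probability `q i = (1 - x i) / m` where `x i` is the marginal probability that bit
`i` is queried, then `q` is a probability distribution, and the probability that the
adversary's index is queried is at most `1/2`. -/
theorem adversary_index_hit_prob (n : ℕ) (hn : 2 ≤ n) (hne : Even n)
    (m : ℕ) (hm : m = n / 2)
    (p : Finset (Fin n) → ℝ) (hp : ∀ S, 0 ≤ p S)
    (hcard : ∀ S, S.card ≠ m → p S = 0)
    (hsum : ∑ S : Finset (Fin n), p S = 1)
    (x : Fin n → ℝ)
    (hx : ∀ i, x i = ∑ S ∈ Finset.univ.filter (fun S : Finset (Fin n) => i ∈ S), p S)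
    (q : Fin n → ℝ) (hq : ∀ i, q i = (1 - x i) / m) :
    (∀ i, 0 ≤ q i) ∧ (∑ i : Fin n, q i = 1) ∧
      (∑ S : Finset (Fin n), p S * (∑ i ∈ S, q i)) ≤ 1 / 2 := by
  have hn2m : n = 2 * m := by
    obtain ⟨k, hk⟩ := hne
    omega
  have hm1 : 1 ≤ m := by omega
  have hmR : (0 : ℝ) < (m : ℝ) := by exact_mod_cast hm1
  have hx0 : ∀ i, 0 ≤ x i := by
    intro i
    rw [hx i]
    exact Finset.sum_nonneg fun S _ => hp S
  have hx1 : ∀ i, x i ≤ 1 := by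
    intro i
    rw [hx i, ← hsum]
    exact Finset.sum_le_sum_of_subset_of_nonneg (Finset.filter_subset _ _)
      (fun S _ _ => hp S)
  -- sum of marginals equals m
  have hsx : ∑ i : Fin n, x i = (m : ℝ) := by
    have h1 : ∑ i : Fin n, x i
        = ∑ S : Finset (Fin n), (S.card : ℝ) * p S := by
      simp only [hx, Finset.sum_filter]
      rw [Finset.sum_comm]
      congr 1
      ext S
      rw [Finset.sum_ite_mem, Finset.univ_inter, Finset.sum_const, nsmul_eq_mul]
    rw [h1]
    have h2 : ∀ S : Finset (Fin n), (S.card : ℝ) * p S = (m : ℝ) * p S := by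
      intro S
      by_cases h : S.card = m
      · rw [h]
      · rw [hcard S h]; ring
    rw [Finset.sum_congr rfl (fun S _ => h2 S), ← Finset.mul_sum, hsum, mul_one]
  have hq0 : ∀ i, 0 ≤ q i := by
    intro i
    rw [hq i]
    exact div_nonneg (by linarith [hx1 i]) hmR.le
  have hqsum : ∑ i : Fin n, q i = 1 := by
    have : ∑ i : Fin n, q i = (∑ i : Fin n, (1 - x i)) / m := by
      simp only [hq]
      rw [← Finset.sum_div]
    rw [this, Finset.sum_sub_distrib, hsx, Finset.sum_const, Finset.card_univ,
      Fintype.card_fin, nsmul_eq_mul, mul_one]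
    rw [hn2m]
    push_cast
    field_simp
    ring
  refine ⟨hq0, hqsum, ?_⟩
  -- main bound
  have hmain : ∑ S : Finset (Fin n), p S * (∑ i ∈ S, q i)
      = ∑ i : Fin n, x i * q i := by
    have h1 : ∀ S : Finset (Fin n), p S * (∑ i ∈ S, q i)
        = ∑ i : Fin n, if i ∈ S then p S * q i else 0 := by
      intro S
      rw [Finset.sum_ite_mem, Finset.univ_inter, Finset.mul_sum]
    rw [Finset.sum_congr rfl (fun S _ => h1 S), Finset.sum_comm]
    congr 1
    ext i
    rw [hx i, Finset.sum_filter, Finset.sum_mul]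
    congr 1
    ext S
    split <;> simp
  rw [hmain]
  have hbound : ∀ i : Fin n, x i * q i ≤ 1 / (4 * m) := by
    intro i
    rw [hq i]
    rw [div_eq_mul_inv, ← mul_assoc]
    have h1 : x i * (1 - x i) ≤ 1 / 4 := by nlinarith [sq_nonneg (2 * x i - 1)]
    have h2 : (0 : ℝ) < (m : ℝ)⁻¹ := inv_pos.mpr hmR
    calc x i * (1 - x i) * (m : ℝ)⁻¹ ≤ (1/4) * (m : ℝ)⁻¹ := by
          exact mul_le_mul_of_nonneg_right h1 h2.le
      _ = 1 / (4 * m) := by field_simp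
  calc ∑ i : Fin n, x i * q i ≤ ∑ _i : Fin n, 1 / (4 * (m : ℝ)) :=
        Finset.sum_le_sum fun i _ => hbound i
    _ = n * (1 / (4 * m)) := by
        rw [Finset.sum_const, Finset.card_univ, Fintype.card_fin, nsmul_eq_mul]
    _ = 1 / 2 := by
        rw [hn2m]; push_cast; field_simp; ring
end

section
/- Let N be a natural number, p ∈ [0,1] a real number, and μ = N·p. If X is distributed according to the binomial distribution with N trials and success probability p (Mathlib's PMF.binomial), then the probability that X < μ/2 is at most exp(−μ/8); that is, Σ_{j ≤ N, (j:ℝ) < μ/2} P[X = j] ≤ exp(−μ/8). -/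
open scoped ENNReal

/-- Chernoff lower-tail bound for the binomial distribution with `δ = 1/2`: if `X`
is binomial with `N` trials and success probability `p`, and `μ = N·p`, then
`Pr[X < μ/2] ≤ exp(-μ/8)`. -/
theorem binomial_chernoff_lower_tail (N : ℕ) (p : ℝ) (hp0 : 0 ≤ p) (hp1 : p ≤ 1)
    (μ : ℝ) (hμ : μ = N * p) :
    ∑ j ∈ Finset.univ.filter (fun j : Fin (N + 1) => (j : ℝ) < μ / 2),
        (PMF.binomial (Real.toNNReal p) (Real.toNNReal_le_one.mpr hp1) N j).toReal
      ≤ Real.exp (-μ / 8) := by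
  have hμ0 : 0 ≤ μ := by rw [hμ]; positivity
  set b : Fin (N + 1) → ℝ := fun j => p ^ (j : ℕ) * (1 - p) ^ (N - (j : ℕ)) * (N.choose j)
    with hb
  have hb_nonneg : ∀ j : Fin (N + 1), 0 ≤ b j := by
    intro j
    have h1p : (0:ℝ) ≤ 1 - p := by linarith
    positivity
  -- Step 1: the PMF value equals b j
  have hval : ∀ j : Fin (N + 1),
      (PMF.binomial (Real.toNNReal p) (Real.toNNReal_le_one.mpr hp1) N j).toReal = b j := by
    intro j
    rw [PMF.binomial_apply]
    have h1 : ((1 : ℝ≥0∞) - (Real.toNNReal p : ℝ≥0∞)).toReal = 1 - p := by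
      rw [ENNReal.toReal_sub_of_le (ENNReal.coe_le_one_iff.mpr (Real.toNNReal_le_one.mpr hp1))
        ENNReal.one_ne_top, ENNReal.toReal_one, ENNReal.coe_toReal, Real.coe_toNNReal _ hp0]
    rw [ENNReal.toReal_mul, ENNReal.toReal_mul, ENNReal.toReal_pow, ENNReal.toReal_pow,
      ENNReal.coe_toReal, Real.coe_toNNReal _ hp0, h1]
    simp [hb, Fin.val_last]
  simp only [hval]
  -- Step 2: pointwise bound on the tail
  have key : ∀ j : Fin (N + 1), (j : ℝ) < μ / 2 →
      b j ≤ Real.exp (μ / 2 * Real.log 2) * (b j * (1/2 : ℝ) ^ (j : ℕ)) := by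
    intro j hj
    have hhalf : ((1:ℝ)/2) ^ (j : ℕ) = Real.exp (-((j : ℕ) * Real.log 2)) := by
      rw [Real.exp_neg, Real.exp_nat_mul, Real.exp_log (by norm_num : (0:ℝ) < 2)]
      rw [one_div, inv_pow]
    rw [hhalf, mul_comm (b j), ← mul_assoc, ← Real.exp_add]
    nth_rewrite 1 [← one_mul (b j)]
    apply mul_le_mul_of_nonneg_right _ (hb_nonneg j)
    rw [← Real.exp_zero]
    apply Real.exp_le_exp.mpr
    have hlog2 : 0 ≤ Real.log 2 := Real.log_nonneg (by norm_num)
    have : μ / 2 * Real.log 2 + -((j : ℕ) * Real.log 2) = (μ / 2 - (j : ℕ)) * Real.log 2 := by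
      ring
    rw [this]
    have : (0:ℝ) ≤ μ / 2 - (j : ℕ) := by linarith
    positivity
  calc ∑ j ∈ Finset.univ.filter (fun j : Fin (N + 1) => (j : ℝ) < μ / 2), b j
      ≤ ∑ j ∈ Finset.univ.filter (fun j : Fin (N + 1) => (j : ℝ) < μ / 2),
          Real.exp (μ / 2 * Real.log 2) * (b j * (1/2 : ℝ) ^ (j : ℕ)) := by
        apply Finset.sum_le_sum
        intro j hj
        exact key j (Finset.mem_filter.mp hj).2
    _ ≤ ∑ j : Fin (N + 1),
          Real.exp (μ / 2 * Real.log 2) * (b j * (1/2 : ℝ) ^ (j : ℕ)) := by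
        apply Finset.sum_le_sum_of_subset_of_nonneg (Finset.filter_subset _ _)
        intro j _ _
        have := hb_nonneg j
        positivity
    _ = Real.exp (μ / 2 * Real.log 2) * ∑ j : Fin (N + 1), b j * (1/2 : ℝ) ^ (j : ℕ) := by
        rw [Finset.mul_sum]
    _ = Real.exp (μ / 2 * Real.log 2) * (1 - p / 2) ^ N := by
        congr 1
        have : ∑ j : Fin (N + 1), b j * (1/2 : ℝ) ^ (j : ℕ)
            = ∑ m ∈ Finset.range (N + 1),
                (p / 2) ^ m * (1 - p) ^ (N - m) * (N.choose m) := by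
          rw [Finset.sum_range fun m =>
            (p / 2) ^ m * (1 - p) ^ (N - m) * (N.choose m : ℝ)]
          apply Finset.sum_congr rfl
          intro j _
          simp only [hb]
          rw [div_pow]
          ring_nf
          norm_num
        rw [this, ← add_pow]
        ring_nf
    _ ≤ Real.exp (μ / 2 * Real.log 2) * Real.exp (-μ / 2) := by
        apply mul_le_mul_of_nonneg_left _ (Real.exp_nonneg _)
        have h1 : (0:ℝ) ≤ 1 - p / 2 := by linarith
        have h2 : 1 - p / 2 ≤ Real.exp (-(p/2)) := by
          have := Real.add_one_le_exp (-(p/2))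
          linarith
        calc (1 - p / 2) ^ N ≤ Real.exp (-(p/2)) ^ N := pow_le_pow_left₀ h1 h2 N
          _ = Real.exp (-μ / 2) := by
            rw [← Real.exp_nat_mul, hμ]; ring_nf
    _ ≤ Real.exp (-μ / 8) := by
        rw [← Real.exp_add]
        apply Real.exp_le_exp.mpr
        have hlog : Real.log 2 < 0.6931471808 := Real.log_two_lt_d9
        nlinarith [hμ0]
end

section
/- Let n ≥ 2 and c ≥ 1 be natural numbers, and let N, K be natural numbers with 1 ≤ K ≤ n. Let t be a positive real with N/K ≥ 2·t and t ≥ 8·(c+2)·ln n. Under the uniform probability distribution on functions ω : Fin N → Fin K, the probability that every ℓ ∈ Fin K satisfies |{j ∈ Fin N : ω(j) = ℓ}| ≥ t is at least 1 − 1/n^{c+1}. -/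
open Finset

/-- MGF-style counting identity: summing `(1/2)^(load ℓ)` over all functions. -/
lemma mgf_sum (N K : ℕ) (ℓ : Fin K) :
    ∑ ω : Fin N → Fin K, (1/2 : ℝ) ^ ((univ.filter (fun j : Fin N => ω j = ℓ)).card) =
      ((K : ℝ) - 1/2) ^ N := by
  have h1 : ∀ ω : Fin N → Fin K,
      (1/2 : ℝ) ^ ((univ.filter (fun j : Fin N => ω j = ℓ)).card) =
        ∏ j : Fin N, (if ω j = ℓ then (1/2 : ℝ) else 1) := by
    intro ω
    rw [← Finset.prod_filter, Finset.prod_const]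
  simp_rw [h1]
  rw [← Fintype.prod_sum (fun (_ : Fin N) (x : Fin K) => if x = ℓ then (1/2 : ℝ) else 1)]
  have h2 : (∑ x : Fin K, (if x = ℓ then (1/2 : ℝ) else 1)) = (K : ℝ) - 1/2 := by
    have h : ∀ x : Fin K, (if x = ℓ then (1/2 : ℝ) else 1)
        = 1 - (if x = ℓ then (1/2 : ℝ) else 0) := by
      intro x; split <;> norm_num
    simp_rw [h, Finset.sum_sub_distrib, Finset.sum_const, Finset.sum_ite_eq' univ ℓ]
    simp
  rw [h2, Finset.prod_const, Finset.card_univ, Fintype.card_fin]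

/-- "Enough readers" claim: if `N` peers each pick one of `K` segments independently
and uniformly at random, where `1 ≤ K ≤ n`, the expected load `N/K` per segment is at
least `2t`, and `t ≥ 8(c+2) ln n`, then with probability at least `1 - 1/n^(c+1)`
every segment is picked by at least `t` peers. -/
theorem enough_readers (n c N K : ℕ) (hn : 2 ≤ n) (hc : 1 ≤ c)
    (hK1 : 1 ≤ K) (hKn : K ≤ n) (t : ℝ) (ht0 : 0 < t)
    (hNK : 2 * t ≤ (N : ℝ) / K)
    (htc : 8 * ((c : ℝ) + 2) * Real.log n ≤ t) :
    (1 : ℝ) - 1 / (n : ℝ) ^ (c + 1) ≤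
      ((Finset.univ.filter (fun ω : Fin N → Fin K =>
          ∀ ℓ : Fin K,
            t ≤ ((Finset.univ.filter (fun j : Fin N => ω j = ℓ)).card : ℝ))).card : ℝ)
        / (Fintype.card (Fin N → Fin K) : ℝ) := by
  classical
  have hK0 : (0 : ℝ) < K := by exact_mod_cast hK1
  have hK0' : (1 : ℝ) ≤ K := by exact_mod_cast hK1
  have hn0 : (0 : ℝ) < n := by positivity
  have hn1 : (1 : ℝ) < n := by exact_mod_cast hn
  have hlogn : 0 < Real.log n := Real.log_pos hn1
  have hTot : (Fintype.card (Fin N → Fin K) : ℝ) = (K : ℝ) ^ N := by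
    simp [Fintype.card_fun]
  have hTot0 : (0 : ℝ) < (K : ℝ) ^ N := by positivity
  -- the bad sets
  set B : Fin K → Finset (Fin N → Fin K) := fun ℓ =>
    univ.filter (fun ω => ((univ.filter (fun j : Fin N => ω j = ℓ)).card : ℝ) < t) with hB
  -- per-segment Chernoff bound
  have hbad : ∀ ℓ : Fin K, ((B ℓ).card : ℝ) ≤ (K : ℝ) ^ N / (n : ℝ) ^ (c + 2) := by
    intro ℓ
    have hhalf : (0:ℝ) < 1/2 := by norm_num
    -- card (B ℓ) * (1/2)^t ≤ (K - 1/2)^N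
    have key : ((B ℓ).card : ℝ) * (1/2 : ℝ) ^ t ≤ ((K : ℝ) - 1/2) ^ N := by
      rw [← mgf_sum N K ℓ]
      calc ((B ℓ).card : ℝ) * (1/2 : ℝ) ^ t
          = ∑ _ω ∈ B ℓ, (1/2 : ℝ) ^ t := by rw [Finset.sum_const, nsmul_eq_mul]
        _ ≤ ∑ ω ∈ B ℓ, (1/2 : ℝ) ^ (((univ.filter (fun j : Fin N => ω j = ℓ)).card : ℕ)) := by
            apply Finset.sum_le_sum
            intro ω hω
            have hlt : ((univ.filter (fun j : Fin N => ω j = ℓ)).card : ℝ) < t := by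
              simpa [hB] using hω
            have := Real.rpow_le_rpow_of_exponent_ge hhalf (by norm_num : (1/2:ℝ) ≤ 1) hlt.le
            simpa [Real.rpow_natCast] using this
        _ ≤ ∑ ω : Fin N → Fin K, (1/2 : ℝ) ^ ((univ.filter (fun j : Fin N => ω j = ℓ)).card) := by
            apply Finset.sum_le_sum_of_subset_of_nonneg (Finset.subset_univ _)
            intros; positivity
    -- (K - 1/2)^N ≤ K^N * exp(-(N/(2K)))
    have hexp1 : ((K : ℝ) - 1/2) ^ N ≤ (K : ℝ) ^ N * Real.exp (-((N:ℝ) / (2 * K))) := by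
      have h0 : (K : ℝ) - 1/2 = (K : ℝ) * (1 - 1/(2*K)) := by field_simp
      have h1 : (1 : ℝ) - 1/(2*K) ≤ Real.exp (-(1/(2*K))) := by
        have := Real.add_one_le_exp (-(1/(2*(K:ℝ))))
        linarith
      have h2 : (0:ℝ) ≤ 1 - 1/(2*(K:ℝ)) := by
        have h21 : 1/(2*(K:ℝ)) ≤ 1/2 := by
          apply one_div_le_one_div_of_le (by norm_num)
          linarith
        linarith
      calc ((K : ℝ) - 1/2) ^ N = (K : ℝ) ^ N * (1 - 1/(2*K)) ^ N := by
            rw [h0, mul_pow]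
        _ ≤ (K : ℝ) ^ N * (Real.exp (-(1/(2*K)))) ^ N := by
            apply mul_le_mul_of_nonneg_left _ (by positivity)
            exact pow_le_pow_left₀ h2 h1 N
        _ = (K : ℝ) ^ N * Real.exp (-((N:ℝ) / (2 * K))) := by
            rw [← Real.exp_nat_mul]
            congr 1
            field_simp
    -- combine: card ≤ K^N * (exp(-(N/(2K))) * 2^t)
    have h4 : ((1:ℝ)/2) ^ t = ((2:ℝ) ^ t)⁻¹ := by
      rw [one_div, Real.inv_rpow (by norm_num : (0:ℝ) ≤ 2)]
    have h2t0 : (0:ℝ) < (2:ℝ) ^ t := Real.rpow_pos_of_pos (by norm_num) t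
    have hhalfpow : (0:ℝ) < (1/2 : ℝ) ^ t := Real.rpow_pos_of_pos hhalf t
    have hcard1 : ((B ℓ).card : ℝ) ≤ (K : ℝ) ^ N * (Real.exp (-((N:ℝ) / (2 * K))) * (2:ℝ) ^ t) := by
      have h3 : ((B ℓ).card : ℝ) ≤ ((K : ℝ) - 1/2) ^ N / (1/2 : ℝ) ^ t := by
        rw [le_div_iff₀ hhalfpow]; exact key
      calc ((B ℓ).card : ℝ) ≤ ((K : ℝ) - 1/2) ^ N / (1/2 : ℝ) ^ t := h3
        _ = ((K : ℝ) - 1/2) ^ N * (2:ℝ) ^ t := by rw [h4, div_eq_mul_inv, inv_inv]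
        _ ≤ ((K : ℝ) ^ N * Real.exp (-((N:ℝ) / (2 * K)))) * (2:ℝ) ^ t :=
            mul_le_mul_of_nonneg_right hexp1 h2t0.le
        _ = (K : ℝ) ^ N * (Real.exp (-((N:ℝ) / (2 * K))) * (2:ℝ) ^ t) := by ring
    -- exp(-(N/(2K))) * 2^t ≤ 1/n^(c+2)
    have hfinal : Real.exp (-((N:ℝ) / (2 * K))) * (2:ℝ) ^ t ≤ 1 / (n : ℝ) ^ (c + 2) := by
      have h2t : (2:ℝ) ^ t = Real.exp (t * Real.log 2) := by
        rw [Real.rpow_def_of_pos (by norm_num : (0:ℝ) < 2)]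
        ring_nf
      have hnpow : ((n : ℝ)) ^ (c + 2) = Real.exp (((c:ℝ) + 2) * Real.log n) := by
        rw [show ((c:ℝ) + 2) = ((c + 2 : ℕ) : ℝ) by push_cast; ring,
          Real.exp_nat_mul, Real.exp_log hn0]
      rw [h2t, hnpow, ← Real.exp_add, one_div, ← Real.exp_neg, Real.exp_le_exp]
      -- need: -(N/(2K)) + t * log 2 ≤ -((c+2) * log n)
      have hNt : t ≤ (N:ℝ) / (2 * K) := by
        have : (N:ℝ) / (2 * K) = ((N:ℝ) / K) / 2 := by ring
        rw [this]; linarith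
      have hlog2 : Real.log 2 < 0.6931471808 := Real.log_two_lt_d9
      have hlog2' : t * Real.log 2 ≤ t * 0.6931471808 :=
        mul_le_mul_of_nonneg_left hlog2.le ht0.le
      have hcln : ((c:ℝ) + 2) * Real.log n ≤ t / 8 := by linarith
      linarith
    calc ((B ℓ).card : ℝ) ≤ (K : ℝ) ^ N * (Real.exp (-((N:ℝ) / (2 * K))) * (2:ℝ) ^ t) := hcard1
      _ ≤ (K : ℝ) ^ N * (1 / (n : ℝ) ^ (c + 2)) := by
          apply mul_le_mul_of_nonneg_left hfinal (by positivity)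
      _ = (K : ℝ) ^ N / (n : ℝ) ^ (c + 2) := by ring
  -- union bound
  have hsub : univ.filter (fun ω : Fin N → Fin K =>
      ¬ ∀ ℓ : Fin K, t ≤ ((univ.filter (fun j : Fin N => ω j = ℓ)).card : ℝ)) ⊆
      univ.biUnion B := by
    intro ω hω
    rw [Finset.mem_filter] at hω
    obtain ⟨-, hω⟩ := hω
    obtain ⟨ℓ, hℓ⟩ := not_forall.mp hω
    have hℓ' := not_le.mp hℓ
    apply Finset.mem_biUnion.2
    exact ⟨ℓ, Finset.mem_univ _, by simp [hB, hℓ']⟩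
  have hBadcard : (((univ.filter (fun ω : Fin N → Fin K =>
      ¬ ∀ ℓ : Fin K, t ≤ ((univ.filter (fun j : Fin N => ω j = ℓ)).card : ℝ))).card : ℝ))
      ≤ (K : ℝ) ^ N / (n : ℝ) ^ (c + 1) := by
    have h1 : (((univ.filter (fun ω : Fin N → Fin K =>
        ¬ ∀ ℓ : Fin K, t ≤ ((univ.filter (fun j : Fin N => ω j = ℓ)).card : ℝ))).card : ℝ))
        ≤ ∑ ℓ : Fin K, ((B ℓ).card : ℝ) := by
      calc (((univ.filter (fun ω : Fin N → Fin K =>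
          ¬ ∀ ℓ : Fin K, t ≤ ((univ.filter (fun j : Fin N => ω j = ℓ)).card : ℝ))).card : ℝ))
          ≤ ((univ.biUnion B).card : ℝ) := by exact_mod_cast Finset.card_le_card hsub
        _ ≤ ∑ ℓ : Fin K, ((B ℓ).card : ℝ) := by exact_mod_cast Finset.card_biUnion_le
    have h2 : ∑ ℓ : Fin K, ((B ℓ).card : ℝ) ≤ (K:ℝ) * ((K : ℝ) ^ N / (n : ℝ) ^ (c + 2)) := by
      calc ∑ ℓ : Fin K, ((B ℓ).card : ℝ)
          ≤ ∑ _ℓ : Fin K, (K : ℝ) ^ N / (n : ℝ) ^ (c + 2) := Finset.sum_le_sum fun ℓ _ => hbad ℓ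
        _ = (K:ℝ) * ((K : ℝ) ^ N / (n : ℝ) ^ (c + 2)) := by
            rw [Finset.sum_const, Finset.card_univ, Fintype.card_fin, nsmul_eq_mul]
    have h3 : (K:ℝ) * ((K : ℝ) ^ N / (n : ℝ) ^ (c + 2)) ≤ (K : ℝ) ^ N / (n : ℝ) ^ (c + 1) := by
      have hKn' : (K:ℝ) ≤ n := by exact_mod_cast hKn
      rw [mul_div_assoc', div_le_div_iff₀ (by positivity) (by positivity)]
      have hpow : (n:ℝ) ^ (c+2) = (n:ℝ) * (n:ℝ) ^ (c+1) := by ring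
      rw [hpow]
      calc (K:ℝ) * (K:ℝ)^N * (n:ℝ)^(c+1)
          ≤ (n:ℝ) * (K:ℝ)^N * (n:ℝ)^(c+1) := by
            apply mul_le_mul_of_nonneg_right
              (mul_le_mul_of_nonneg_right hKn' hTot0.le) (by positivity)
        _ = (K:ℝ)^N * ((n:ℝ) * (n:ℝ)^(c+1)) := by ring
    linarith
  -- complement counting
  have hsplit := Finset.card_filter_add_card_filter_not
    (s := (univ : Finset (Fin N → Fin K)))
    (p := fun ω : Fin N → Fin K =>
      ∀ ℓ : Fin K, t ≤ ((univ.filter (fun j : Fin N => ω j = ℓ)).card : ℝ))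
  have hsplit' : (((univ.filter (fun ω : Fin N → Fin K =>
        ∀ ℓ : Fin K, t ≤ ((univ.filter (fun j : Fin N => ω j = ℓ)).card : ℝ))).card : ℝ))
      + (((univ.filter (fun ω : Fin N → Fin K =>
        ¬ ∀ ℓ : Fin K, t ≤ ((univ.filter (fun j : Fin N => ω j = ℓ)).card : ℝ))).card : ℝ))
      = (K : ℝ) ^ N := by
    rw [← hTot]
    exact_mod_cast (by simpa [Finset.card_univ] using hsplit)
  rw [hTot, le_div_iff₀ hTot0]
  have hexpand : (1 - 1 / (n : ℝ) ^ (c + 1)) * (K:ℝ)^N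
      = (K:ℝ)^N - (K:ℝ)^N / (n : ℝ) ^ (c + 1) := by
    field_simp
  linarith
end

section
/- Let a ≥ 1 be a real number, let q be a real number with 0 < q < 1, and let P be a natural number. Then Σ_{p=0}^{P} ⌈a·q^p⌉ ≤ 2a/(1 − q) + max(0, P − ⌊log_{1/q} a⌋), where ⌈·⌉ denotes the ceiling function and log_{1/q} a = (ln a)/(ln(1/q)). -/
/-- Time-complexity sum bound: for `a ≥ 1`, `0 < q < 1` and any `P`,
`Σ_{p=0}^{P} ⌈a·q^p⌉ ≤ 2a/(1-q) + max(0, P - ⌊log_{1/q} a⌋)`. -/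
theorem ceil_geometric_sum_bound (a q : ℝ) (ha : 1 ≤ a) (hq0 : 0 < q) (hq1 : q < 1)
    (P : ℕ) :
    ∑ p ∈ Finset.range (P + 1), (⌈a * q ^ p⌉ : ℝ) ≤
      2 * a / (1 - q) +
        max 0 ((P : ℝ) - (⌊Real.log a / Real.log (1 / q)⌋ : ℝ)) := by
  have hq1' : (0:ℝ) < 1 - q := by linarith
  have hlogq : 0 < Real.log (1 / q) := Real.log_pos (by rw [lt_div_iff₀ hq0]; linarith)
  set L : ℤ := ⌊Real.log a / Real.log (1 / q)⌋ with hLdef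
  have hL0 : 0 ≤ L :=
    Int.le_floor.mpr (by exact_mod_cast div_nonneg (Real.log_nonneg ha) hlogq.le)
  -- p ≤ L implies 1 ≤ a q^p
  have h1 : ∀ p : ℕ, (p : ℤ) ≤ L → 1 ≤ a * q ^ p := by
    intro p hp
    have hple : (p:ℝ) ≤ Real.log a / Real.log (1 / q) := by
      refine le_trans ?_ (Int.floor_le _)
      exact_mod_cast hp
    have hmul : (p:ℝ) * Real.log (1/q) ≤ Real.log a := (le_div_iff₀ hlogq).mp hple
    have hlog : Real.log ((1/q) ^ p) ≤ Real.log a := by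
      rw [Real.log_pow]; exact_mod_cast hmul
    have hpow : (1/q : ℝ) ^ p ≤ a := by
      have h0 : (0:ℝ) < (1/q) ^ p := by positivity
      exact (Real.log_le_log_iff h0 (by linarith)).mp hlog
    rw [div_pow, one_pow, div_le_iff₀ (pow_pos hq0 p)] at hpow
    linarith
  -- L < p implies a q^p < 1
  have h2 : ∀ p : ℕ, L < (p : ℤ) → a * q ^ p < 1 := by
    intro p hp
    have hple : Real.log a / Real.log (1 / q) < (p:ℝ) := by
      have : ((L:ℝ) + 1) ≤ (p:ℝ) := by exact_mod_cast hp
      linarith [Int.lt_floor_add_one (Real.log a / Real.log (1 / q))]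
    have hmul : Real.log a < (p:ℝ) * Real.log (1/q) := (div_lt_iff₀ hlogq).mp hple
    have hlog : Real.log a < Real.log ((1/q) ^ p) := by
      rw [Real.log_pow]; exact_mod_cast hmul
    have hpow : a < (1/q : ℝ) ^ p := by
      have h0 : (0:ℝ) < a := by linarith
      exact (Real.log_lt_log_iff h0 (by positivity)).mp hlog
    rw [div_pow, one_pow, lt_div_iff₀ (pow_pos hq0 p)] at hpow
    linarith
  -- per-term bound
  have hterm : ∀ p ∈ Finset.range (P + 1),
      (⌈a * q ^ p⌉ : ℝ) ≤ 2 * a * q ^ p + (if L < (p:ℤ) then (1:ℝ) else 0) := by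
    intro p _
    by_cases h : L < (p:ℤ)
    · have hx := h2 p h
      have hceil : (⌈a * q ^ p⌉ : ℝ) ≤ 1 := by
        exact_mod_cast Int.ceil_le.mpr (by exact_mod_cast hx.le)
      have : (0:ℝ) ≤ 2 * a * q ^ p := by positivity
      simp only [h, if_true]
      linarith
    · push_neg at h
      have hx := h1 p h
      have hceil : (⌈a * q ^ p⌉ : ℝ) < a * q ^ p + 1 := Int.ceil_lt_add_one _
      simp only [not_lt.mpr h, if_false]
      nlinarith
  calc ∑ p ∈ Finset.range (P + 1), (⌈a * q ^ p⌉ : ℝ)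
      ≤ ∑ p ∈ Finset.range (P + 1),
          (2 * a * q ^ p + (if L < (p:ℤ) then (1:ℝ) else 0)) :=
        Finset.sum_le_sum hterm
    _ = 2 * a * ∑ p ∈ Finset.range (P + 1), q ^ p
          + ∑ p ∈ Finset.range (P + 1), (if L < (p:ℤ) then (1:ℝ) else 0) := by
        rw [Finset.sum_add_distrib, Finset.mul_sum]
    _ ≤ 2 * a / (1 - q) + max 0 ((P : ℝ) - (L : ℝ)) := by
        have hgeom : ∑ p ∈ Finset.range (P + 1), q ^ p ≤ 1 / (1 - q) := by
          have hqe : q ≠ 1 := by linarith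
          rw [geom_sum_eq hqe]
          have heq : (q ^ (P + 1) - 1) / (q - 1) = (1 - q ^ (P + 1)) / (1 - q) := by
            rw [div_eq_div_iff (by linarith : q - 1 ≠ 0) (by linarith : 1 - q ≠ 0)]
            ring
          rw [heq]
          have hqp : 0 ≤ q ^ (P + 1) := by positivity
          exact (div_le_div_iff_of_pos_right hq1').mpr (by linarith)
        have h2a : (0:ℝ) ≤ 2 * a := by linarith
        have hb1 : 2 * a * ∑ p ∈ Finset.range (P + 1), q ^ p ≤ 2 * a / (1 - q) := by
          calc 2 * a * ∑ p ∈ Finset.range (P + 1), q ^ p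
              ≤ 2 * a * (1 / (1 - q)) := by
                exact mul_le_mul_of_nonneg_left hgeom h2a
            _ = 2 * a / (1 - q) := by ring
        have hcount : ∑ p ∈ Finset.range (P + 1), (if L < (p:ℤ) then (1:ℝ) else 0)
            ≤ max 0 ((P : ℝ) - (L : ℝ)) := by
          set m : ℕ := L.toNat with hm
          have hLm : (m : ℤ) = L := Int.toNat_of_nonneg hL0
          have hcond : ∀ p : ℕ, (L < (p:ℤ)) ↔ (m < p) := by
            intro p; rw [← hLm]; exact_mod_cast Iff.rfl
          have hsum : ∑ p ∈ Finset.range (P + 1), (if L < (p:ℤ) then (1:ℝ) else 0)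
              = ((Finset.range (P + 1)).filter (fun p => m < p)).card := by
            rw [show (fun p : ℕ => if L < (p:ℤ) then (1:ℝ) else 0)
                = (fun p : ℕ => if m < p then (1:ℝ) else 0) from
              funext fun p => by simp [hcond p]]
            exact Finset.sum_boole _ _
          rw [hsum]
          have hfilter : (Finset.range (P + 1)).filter (fun p => m < p)
              = Finset.Ico (m + 1) (P + 1) := by
            ext x
            simp [Finset.mem_Ico, Nat.lt_succ_iff, Nat.succ_le_iff]
            tauto
          rw [hfilter, Nat.card_Ico]
          by_cases hmP : m ≤ P
          · have : ((P + 1 - (m + 1) : ℕ) : ℝ) = (P:ℝ) - (m:ℝ) := by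
              have : P + 1 - (m + 1) = P - m := by omega
              rw [this, Nat.cast_sub hmP]
            rw [this]
            have : (m:ℝ) = (L:ℝ) := by exact_mod_cast hLm
            rw [this]
            exact le_max_right _ _
          · have : P + 1 - (m + 1) = 0 := by omega
            rw [this]
            simpa using le_max_left 0 ((P : ℝ) - (L : ℝ))
        linarith
end
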